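/- Let I ⊆ ℤ² be finite, and let r'_j (j ∈ Π_y(I)) and c'_i (i ∈ Π_x(I)) be nonnegative integers. If the polytope P = {x ∈ ℝ^{2|I|} : x ≥ 0, A ζ = r', A' η = c', ζ_{i,j} + η_{i,j} ≤ 1 for all (i,j) ∈ I} (with x = (ζ, η) and A, A' the row and column incidence matrices of I) is nonempty, then P contains an integral point, i.e., there exist ζ_{i,j}, η_{i,j} ∈ {0,1} satisfying all the constraints. -/
import Mathlib


open Finset

/-- Projection of `I` onto the second coordinate. -/
def PiY (I : Finset (ℤ × ℤ)) : Finset ℤ := I.image Prod.snd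

/-- Projection of `I` onto the first coordinate. -/
def PiX (I : Finset (ℤ × ℤ)) : Finset ℤ := I.image Prod.fst

lemma card_attach_filter {α : Type*} [DecidableEq α] (s : Finset α) (P : α → Prop)
    [DecidablePred P] :
    (s.attach.filter fun x => P x.1).card = (s.filter P).card := by
  rw [← Finset.card_image_of_injective (s.attach.filter fun x => P x.1) Subtype.val_injective]
  congr 1
  ext a
  simp only [Finset.mem_image, Finset.mem_filter, Finset.mem_attach, true_and,
    Subtype.exists, exists_and_left, exists_prop, exists_eq_right_right]
  tauto

set_option maxHeartbeats 1000000 in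
/-- If the polytope `{(ζ,η) ≥ 0 : row sums of ζ, column sums of η as prescribed,
ζ_{i,j} + η_{i,j} ≤ 1}` is nonempty (over the reals), then it contains a 0/1 point. -/
theorem integral_point_exists (I : Finset (ℤ × ℤ)) (r' c' : ℤ → ℕ)
    (hne : ∃ ζ η : ℤ × ℤ → ℝ,
      (∀ p ∈ I, 0 ≤ ζ p ∧ 0 ≤ η p ∧ ζ p + η p ≤ 1) ∧
      (∀ j ∈ PiY I, ∑ p ∈ I.filter (fun q => q.2 = j), ζ p = (r' j : ℝ)) ∧
      (∀ i ∈ PiX I, ∑ p ∈ I.filter (fun q => q.1 = i), η p = (c' i : ℝ))) :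
    ∃ ζ η : ℤ × ℤ → ℕ,
      (∀ p ∈ I, ζ p ≤ 1 ∧ η p ≤ 1 ∧ ζ p + η p ≤ 1) ∧
      (∀ j ∈ PiY I, ∑ p ∈ I.filter (fun q => q.2 = j), ζ p = r' j) ∧
      (∀ i ∈ PiX I, ∑ p ∈ I.filter (fun q => q.1 = i), η p = c' i) := by
  classical
  obtain ⟨ζ, η, hpos, hrow, hcol⟩ := hne
  -- the set of "slots" : `r' j` slots for each row `j`, `c' i` slots for each column `i`
  set slots : Finset (Bool × ℤ × ℕ) :=
    ((PiY I).biUnion fun j => (range (r' j)).image fun k => (true, j, k)) ∪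
    ((PiX I).biUnion fun i => (range (c' i)).image fun k => (false, i, k)) with hslots
  have hmem : ∀ (b : Bool) (j : ℤ) (k : ℕ), (b, j, k) ∈ slots ↔
      (b = true ∧ j ∈ PiY I ∧ k < r' j) ∨ (b = false ∧ j ∈ PiX I ∧ k < c' j) := by
    intro b j k
    simp only [hslots, Finset.mem_union, Finset.mem_biUnion, Finset.mem_image,
      Finset.mem_range, Prod.mk.injEq]
    constructor
    · rintro (⟨j', hj', k', hk', hb, hj, hk⟩ | ⟨j', hj', k', hk', hb, hj, hk⟩)
      · exact Or.inl ⟨hb.symm, hj ▸ hj', hk ▸ hj ▸ hk'⟩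
      · exact Or.inr ⟨hb.symm, hj ▸ hj', hk ▸ hj ▸ hk'⟩
    · rintro (⟨hb, hj, hk⟩ | ⟨hb, hj, hk⟩)
      · exact Or.inl ⟨j, hj, k, hk, hb.symm, rfl, rfl⟩
      · exact Or.inr ⟨j, hj, k, hk, hb.symm, rfl, rfl⟩
  -- neighborhoods: a row slot can use any cell in its row, a column slot any cell in its column
  set t : Bool × ℤ × ℕ → Finset (ℤ × ℤ) := fun x =>
    if x.1 = true then I.filter (fun q => q.2 = x.2.1) else I.filter (fun q => q.1 = x.2.1)
    with ht
  -- Hall's condition, using the fractional solution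
  have hall : ∀ s : Finset {x // x ∈ slots}, s.card ≤ (s.biUnion fun x => t x.1).card := by
    intro s
    set J : Finset ℤ := (s.filter fun x => x.1.1 = true).image fun x => x.1.2.1 with hJ
    set K : Finset ℤ := (s.filter fun x => x.1.1 = false).image fun x => x.1.2.1 with hK
    set N : Finset (ℤ × ℤ) := I.filter (fun p => p.2 ∈ J ∨ p.1 ∈ K) with hN
    have hJY : ∀ j ∈ J, j ∈ PiY I := by
      intro j hj
      rw [hJ] at hj
      obtain ⟨x, hx, hxj⟩ := Finset.mem_image.mp hj
      obtain ⟨hxs, hxt⟩ := Finset.mem_filter.mp hx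
      obtain ⟨⟨b, j', k⟩, hb⟩ := x
      have hxj' : j' = j := hxj
      have hxt' : b = true := hxt
      rcases (hmem b j' k).mp hb with ⟨_, h, _⟩ | ⟨hb', _, _⟩
      · exact hxj' ▸ h
      · rw [hxt'] at hb'; exact absurd hb' (by simp)
    have hKX : ∀ i ∈ K, i ∈ PiX I := by
      intro i hi
      rw [hK] at hi
      obtain ⟨x, hx, hxi⟩ := Finset.mem_image.mp hi
      obtain ⟨hxs, hxt⟩ := Finset.mem_filter.mp hx
      obtain ⟨⟨b, i', k⟩, hb⟩ := x
      have hxi' : i' = i := hxi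
      have hxt' : b = false := hxt
      rcases (hmem b i' k).mp hb with ⟨hb', _, _⟩ | ⟨_, h, _⟩
      · rw [hxt'] at hb'; exact absurd hb' (by simp)
      · exact hxi' ▸ h
    -- `s` has at most `∑_J r' + ∑_K c'` elements
    have h1 : s.card ≤ ∑ j ∈ J, r' j + ∑ i ∈ K, c' i := by
      have hcards : s.card = (s.image Subtype.val).card :=
        (Finset.card_image_of_injective s Subtype.val_injective).symm
      have hsub : s.image Subtype.val ⊆
          (J.biUnion fun j => (range (r' j)).image fun k => (true, j, k)) ∪
          (K.biUnion fun i => (range (c' i)).image fun k => (false, i, k)) := by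
        intro x hx
        obtain ⟨y, hy, hyx⟩ := Finset.mem_image.mp hx
        obtain ⟨⟨b, j, k⟩, hb⟩ := y
        simp only at hyx
        subst hyx
        rcases (hmem b j k).mp hb with ⟨hb', hj, hk⟩ | ⟨hb', hi, hk⟩
        · subst hb'
          refine Finset.mem_union_left _ (Finset.mem_biUnion.mpr ⟨j, ?_, ?_⟩)
          · exact Finset.mem_image.mpr ⟨⟨(true, j, k), hb⟩,
              Finset.mem_filter.mpr ⟨hy, rfl⟩, rfl⟩
          · exact Finset.mem_image.mpr ⟨k, Finset.mem_range.mpr hk, rfl⟩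
        · subst hb'
          refine Finset.mem_union_right _ (Finset.mem_biUnion.mpr ⟨j, ?_, ?_⟩)
          · exact Finset.mem_image.mpr ⟨⟨(false, j, k), hb⟩,
              Finset.mem_filter.mpr ⟨hy, rfl⟩, rfl⟩
          · exact Finset.mem_image.mpr ⟨k, Finset.mem_range.mpr hk, rfl⟩
      calc s.card = (s.image Subtype.val).card := hcards
        _ ≤ _ := Finset.card_le_card hsub
        _ ≤ ((J.biUnion fun j => (range (r' j)).image fun k => ((true : Bool), j, k)).card) +
            ((K.biUnion fun i => (range (c' i)).image fun k => ((false : Bool), i, k)).card) :=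
          Finset.card_union_le _ _
        _ ≤ ∑ j ∈ J, r' j + ∑ i ∈ K, c' i := by
          gcongr
          · calc _ ≤ ∑ j ∈ J, ((range (r' j)).image fun k => ((true : Bool), j, k)).card :=
                Finset.card_biUnion_le
              _ ≤ ∑ j ∈ J, r' j := by
                refine Finset.sum_le_sum fun j _ => ?_
                simpa using Finset.card_image_le.trans (le_of_eq (Finset.card_range _))
          · calc _ ≤ ∑ i ∈ K, ((range (c' i)).image fun k => ((false : Bool), i, k)).card :=
                Finset.card_biUnion_le
              _ ≤ ∑ i ∈ K, c' i := by
                refine Finset.sum_le_sum fun i _ => ?_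
                simpa using Finset.card_image_le.trans (le_of_eq (Finset.card_range _))
    -- fractional solution bounds that by `|N|`
    have h2 : ((∑ j ∈ J, r' j : ℕ) : ℝ) + ((∑ i ∈ K, c' i : ℕ) : ℝ) ≤ (N.card : ℝ) := by
      have hA : ∑ j ∈ J, ((r' j : ℝ)) = ∑ p ∈ N, (if p.2 ∈ J then ζ p else 0) := by
        have : ∀ j ∈ J, (r' j : ℝ) = ∑ p ∈ I.filter (fun q => q.2 = j), ζ p :=
          fun j hj => (hrow j (hJY j hj)).symm
        rw [Finset.sum_congr rfl this, ← Finset.sum_biUnion]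
        · have heq : (J.biUnion fun j => I.filter (fun q => q.2 = j)) =
              N.filter (fun p => p.2 ∈ J) := by
            ext p
            simp only [Finset.mem_biUnion, Finset.mem_filter, hN]
            constructor
            · rintro ⟨j, hj, hp, hpj⟩
              exact ⟨⟨hp, Or.inl (hpj ▸ hj)⟩, hpj ▸ hj⟩
            · rintro ⟨⟨hp, _⟩, hpj⟩
              exact ⟨p.2, hpj, hp, rfl⟩
          rw [heq, ← Finset.sum_filter]
        · intro a _ b _ hab
          simp only [Finset.disjoint_left, Finset.mem_filter]
          rintro p ⟨_, h1⟩ ⟨_, h2⟩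
          exact hab (h1 ▸ h2 ▸ rfl)
      have hB : ∑ i ∈ K, ((c' i : ℝ)) = ∑ p ∈ N, (if p.1 ∈ K then η p else 0) := by
        have : ∀ i ∈ K, (c' i : ℝ) = ∑ p ∈ I.filter (fun q => q.1 = i), η p :=
          fun i hi => (hcol i (hKX i hi)).symm
        rw [Finset.sum_congr rfl this, ← Finset.sum_biUnion]
        · have heq : (K.biUnion fun i => I.filter (fun q => q.1 = i)) =
              N.filter (fun p => p.1 ∈ K) := by
            ext p
            simp only [Finset.mem_biUnion, Finset.mem_filter, hN]
            constructor
            · rintro ⟨i, hi, hp, hpi⟩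
              exact ⟨⟨hp, Or.inr (hpi ▸ hi)⟩, hpi ▸ hi⟩
            · rintro ⟨⟨hp, _⟩, hpi⟩
              exact ⟨p.1, hpi, hp, rfl⟩
          rw [heq, ← Finset.sum_filter]
        · intro a _ b _ hab
          simp only [Finset.disjoint_left, Finset.mem_filter]
          rintro p ⟨_, h1⟩ ⟨_, h2⟩
          exact hab (h1 ▸ h2 ▸ rfl)
      push_cast
      rw [hA, hB, ← Finset.sum_add_distrib]
      calc ∑ p ∈ N, ((if p.2 ∈ J then ζ p else 0) + (if p.1 ∈ K then η p else 0))
          ≤ ∑ p ∈ N, (1 : ℝ) := by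
            refine Finset.sum_le_sum fun p hp => ?_
            obtain ⟨hpI, hpJK⟩ := Finset.mem_filter.mp hp
            obtain ⟨hz, he, hze⟩ := hpos p hpI
            split_ifs with hh1 hh2
            · linarith
            · linarith
            · linarith
            · exact absurd hpJK (by tauto)
        _ = N.card := by simp
    have h2' : ∑ j ∈ J, r' j + ∑ i ∈ K, c' i ≤ N.card := by
      have hcast : ((∑ j ∈ J, r' j + ∑ i ∈ K, c' i : ℕ) : ℝ) ≤ (N.card : ℝ) := by
        push_cast
        push_cast at h2
        linarith
      exact_mod_cast hcast
    -- `N` is contained in the neighborhood union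
    have h3 : N ⊆ s.biUnion fun x => t x.1 := by
      intro p hp
      obtain ⟨hpI, hpJK⟩ := Finset.mem_filter.mp hp
      rcases hpJK with hpJ | hpK
      · obtain ⟨x, hx, hxj⟩ := Finset.mem_image.mp hpJ
        obtain ⟨hxs, hxt⟩ := Finset.mem_filter.mp hx
        refine Finset.mem_biUnion.mpr ⟨x, hxs, ?_⟩
        rw [ht]
        simp only [hxt, if_pos rfl, hxj]
        exact Finset.mem_filter.mpr ⟨hpI, rfl⟩
      · obtain ⟨x, hx, hxi⟩ := Finset.mem_image.mp hpK
        obtain ⟨hxs, hxt⟩ := Finset.mem_filter.mp hx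
        refine Finset.mem_biUnion.mpr ⟨x, hxs, ?_⟩
        rw [ht]
        simp only [hxt, hxi]
        exact Finset.mem_filter.mpr ⟨hpI, rfl⟩
    exact h1.trans (h2'.trans (Finset.card_le_card h3))
  -- Hall's marriage theorem
  obtain ⟨f, hfinj, hft⟩ :=
    (Finset.all_card_le_biUnion_card_iff_existsInjective'
      (fun x : {x // x ∈ slots} => t x.1)).mp hall
  set Sζ : Finset (ℤ × ℤ) := (slots.attach.filter fun x => x.1.1 = true).image f with hSζ
  set Sη : Finset (ℤ × ℤ) := (slots.attach.filter fun x => x.1.1 = false).image f with hSη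
  have hdisj : ∀ p, ¬(p ∈ Sζ ∧ p ∈ Sη) := by
    rintro p ⟨h1, h2⟩
    obtain ⟨x, hx, hxp⟩ := Finset.mem_image.mp h1
    obtain ⟨y, hy, hyp⟩ := Finset.mem_image.mp h2
    have : x = y := hfinj (hxp.trans hyp.symm)
    subst this
    have hxt := (Finset.mem_filter.mp hx).2
    have hxf := (Finset.mem_filter.mp hy).2
    exact absurd (hxt.symm.trans hxf) (by simp)
  refine ⟨fun p => if p ∈ Sζ then 1 else 0, fun p => if p ∈ Sη then 1 else 0, ?_, ?_, ?_⟩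
  · intro p hp
    refine ⟨?_, ?_, ?_⟩
    · dsimp only; split_ifs <;> omega
    · dsimp only; split_ifs <;> omega
    · dsimp only
      by_cases h1 : p ∈ Sζ <;> by_cases h2 : p ∈ Sη
      · exact absurd ⟨h1, h2⟩ (hdisj p)
      all_goals simp [h1, h2]
  · intro j hj
    have key : (I.filter (fun q => q.2 = j)).filter (fun p => p ∈ Sζ) =
        (slots.attach.filter fun x => x.1.1 = true ∧ x.1.2.1 = j).image f := by
      ext p
      constructor
      · intro hpmem
        obtain ⟨hpIj, hpS⟩ := Finset.mem_filter.mp hpmem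
        obtain ⟨hpI, hpj⟩ := Finset.mem_filter.mp hpIj
        obtain ⟨x, hx, hxp⟩ := Finset.mem_image.mp hpS
        have hxt : x.1.1 = true := (Finset.mem_filter.mp hx).2
        have h1 := hft x
        simp only [ht] at h1
        rw [if_pos hxt, hxp] at h1
        have hrowx : p.2 = x.1.2.1 := (Finset.mem_filter.mp h1).2
        refine Finset.mem_image.mpr ⟨x, Finset.mem_filter.mpr
          ⟨Finset.mem_attach _ _, hxt, ?_⟩, hxp⟩
        rw [← hrowx]; exact hpj
      · intro hpmem
        obtain ⟨x, hx, hxp⟩ := Finset.mem_image.mp hpmem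
        obtain ⟨-, hxt, hxj⟩ := Finset.mem_filter.mp hx
        have h1 := hft x
        simp only [ht] at h1
        rw [if_pos hxt, hxp, hxj] at h1
        exact Finset.mem_filter.mpr ⟨h1, Finset.mem_image.mpr ⟨x,
          Finset.mem_filter.mpr ⟨Finset.mem_attach _ _, hxt⟩, hxp⟩⟩
    have hslotcard : (slots.filter fun x => x.1 = true ∧ x.2.1 = j).card = r' j := by
      have heq : (slots.filter fun x => x.1 = true ∧ x.2.1 = j) =
          (range (r' j)).image fun k => ((true : Bool), j, k) := by
        ext ⟨b, j', k⟩
        simp only [Finset.mem_filter, Finset.mem_image, Finset.mem_range, Prod.mk.injEq]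
        constructor
        · rintro ⟨hb, ht', hj'⟩
          have hb2 : b = true := ht'
          have hj2 : j' = j := hj'
          rcases (hmem b j' k).mp hb with ⟨_, _, hk⟩ | ⟨h, _, _⟩
          · exact ⟨k, hj2 ▸ hk, by rw [hb2], by rw [hj2], rfl⟩
          · rw [hb2] at h; exact absurd h (by simp)
        · rintro ⟨k', hk', hb, hj', hk⟩
          subst hb; subst hj'; subst hk
          exact ⟨(hmem true j k').mpr (Or.inl ⟨rfl, hj, hk'⟩), rfl, rfl⟩
      rw [heq, Finset.card_image_of_injective _ (fun a b h => by simpa using h),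
        Finset.card_range]
    calc ∑ p ∈ I.filter (fun q => q.2 = j), (if p ∈ Sζ then 1 else 0)
        = ∑ p ∈ (I.filter (fun q => q.2 = j)).filter (fun p => p ∈ Sζ), 1 :=
          (Finset.sum_filter _ _).symm
      _ = ((I.filter (fun q => q.2 = j)).filter (fun p => p ∈ Sζ)).card := by
          rw [Finset.sum_const, smul_eq_mul, mul_one]
      _ = r' j := by
          rw [key, Finset.card_image_of_injective _ hfinj,
            card_attach_filter slots (fun x => x.1 = true ∧ x.2.1 = j), hslotcard]
  · intro i hi
    have key : (I.filter (fun q => q.1 = i)).filter (fun p => p ∈ Sη) =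
        (slots.attach.filter fun x => x.1.1 = false ∧ x.1.2.1 = i).image f := by
      ext p
      constructor
      · intro hpmem
        obtain ⟨hpIi, hpS⟩ := Finset.mem_filter.mp hpmem
        obtain ⟨hpI, hpi⟩ := Finset.mem_filter.mp hpIi
        obtain ⟨x, hx, hxp⟩ := Finset.mem_image.mp hpS
        have hxt : x.1.1 = false := (Finset.mem_filter.mp hx).2
        have h1 := hft x
        simp only [ht] at h1
        rw [if_neg (by rw [hxt]; exact Bool.false_ne_true), hxp] at h1
        have hcolx : p.1 = x.1.2.1 := (Finset.mem_filter.mp h1).2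
        refine Finset.mem_image.mpr ⟨x, Finset.mem_filter.mpr
          ⟨Finset.mem_attach _ _, hxt, ?_⟩, hxp⟩
        rw [← hcolx]; exact hpi
      · intro hpmem
        obtain ⟨x, hx, hxp⟩ := Finset.mem_image.mp hpmem
        obtain ⟨-, hxt, hxi⟩ := Finset.mem_filter.mp hx
        have h1 := hft x
        simp only [ht] at h1
        rw [if_neg (by rw [hxt]; exact Bool.false_ne_true), hxp, hxi] at h1
        exact Finset.mem_filter.mpr ⟨h1, Finset.mem_image.mpr ⟨x,
          Finset.mem_filter.mpr ⟨Finset.mem_attach _ _, hxt⟩, hxp⟩⟩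
    have hslotcard : (slots.filter fun x => x.1 = false ∧ x.2.1 = i).card = c' i := by
      have heq : (slots.filter fun x => x.1 = false ∧ x.2.1 = i) =
          (range (c' i)).image fun k => ((false : Bool), i, k) := by
        ext ⟨b, i', k⟩
        simp only [Finset.mem_filter, Finset.mem_image, Finset.mem_range, Prod.mk.injEq]
        constructor
        · rintro ⟨hb, ht', hi'⟩
          have hb2 : b = false := ht'
          have hi2 : i' = i := hi'
          rcases (hmem b i' k).mp hb with ⟨h, _, _⟩ | ⟨_, _, hk⟩
          · rw [hb2] at h; exact absurd h (by simp)
          · exact ⟨k, hi2 ▸ hk, by rw [hb2], by rw [hi2], rfl⟩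
        · rintro ⟨k', hk', hb, hi', hk⟩
          subst hb; subst hi'; subst hk
          exact ⟨(hmem false i k').mpr (Or.inr ⟨rfl, hi, hk'⟩), rfl, rfl⟩
      rw [heq, Finset.card_image_of_injective _ (fun a b h => by simpa using h),
        Finset.card_range]
    calc ∑ p ∈ I.filter (fun q => q.1 = i), (if p ∈ Sη then 1 else 0)
        = ∑ p ∈ (I.filter (fun q => q.1 = i)).filter (fun p => p ∈ Sη), 1 :=
          (Finset.sum_filter _ _).symm
      _ = ((I.filter (fun q => q.1 = i)).filter (fun p => p ∈ Sη)).card := by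
          rw [Finset.sum_const, smul_eq_mul, mul_one]
      _ = c' i := by
          rw [key, Finset.card_image_of_injective _ hfinj,
            card_attach_filter slots (fun x => x.1 = false ∧ x.2.1 = i), hslotcard]
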